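/- Let p ∈ [0,1] and q ∈ (0,1). Then the Kullback–Leibler divergence between the Bernoulli(p) and Bernoulli(q) distributions, measured in bits (base-2 logarithm), satisfies D_KL(Bernoulli(p) ‖ Bernoulli(q)) ≤ (p − q)² / (q·(1 − q)·ln 2). -/

import Mathlib

open MeasureTheory Matrix

namespace Pandemic

variable {r : ℕ}

/-- The vertex set: `n i` vertices of each type `i`. -/
abbrev Vert (n : Fin r → ℕ) : Type := (i : Fin r) × Fin (n i)

/-- The largest (real) eigenvalue of a matrix. -/
noncomputable def maxEig (M : Matrix (Fin r) (Fin r) ℝ) : ℝ :=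
  sSup {t : ℝ | Module.End.HasEigenvalue (Matrix.toLin' M) t}

/-- `(n_1,…,n_r)` is `A`-balanced if `n i ≤ A * n j` for all `i, j`. -/
def Balanced (A : ℕ) (n : Fin r → ℕ) : Prop := ∀ i j, n i ≤ A * n j

/-- `Λ` is `ε`-separated: every entry is `0` or lies in `[ε, 1/ε]`. -/
def Separated (ε : ℝ) (Λ : Matrix (Fin r) (Fin r) ℝ) : Prop :=
  ∀ i j, Λ i j = 0 ∨ (ε ≤ Λ i j ∧ Λ i j ≤ 1 / ε)

/-- The graph on types: `i ~ j` iff `Λ i j > 0` (symmetrized). -/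
def typeGraph (Λ : Matrix (Fin r) (Fin r) ℝ) : SimpleGraph (Fin r) where
  Adj i j := i ≠ j ∧ (0 < Λ i j ∨ 0 < Λ j i)
  symm := ⟨by
    intro i j h
    exact ⟨h.1.symm, h.2.symm⟩⟩
  loopless := ⟨by intro i h; exact h.1 rfl⟩

/-- `Λ` is connected if the graph on types with edges at positive entries is connected. -/
def ConnectedTypes (Λ : Matrix (Fin r) (Fin r) ℝ) : Prop := (typeGraph Λ).Connected

/-- The matrix of infection probabilities `p i j = Λ i j / √(n i * n j)`. -/
noncomputable def pMat (n : Fin r → ℕ) (Λ : Matrix (Fin r) (Fin r) ℝ) :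
    Matrix (Fin r) (Fin r) ℝ :=
  fun i j => Λ i j / Real.sqrt ((n i : ℝ) * (n j : ℝ))

/-- The descendants matrix `M i j = p i j * n j`. -/
noncomputable def mMat (n : Fin r → ℕ) (Λ : Matrix (Fin r) (Fin r) ℝ) :
    Matrix (Fin r) (Fin r) ℝ :=
  fun i j => pMat n Λ i j * (n j : ℝ)

/-- The product Bernoulli measure on edge-indicators: the (unordered) pair `{u, v}`
is an edge independently with probability `p (type u) (type v)`. -/
noncomputable def graphMeasure (n : Fin r → ℕ) (p : Fin r → Fin r → ℝ) :
    Measure (Sym2 (Vert n) → Bool) :=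
  Measure.pi fun s =>
    (PMF.bernoulli (min (Real.toNNReal (p (Quot.out s).1.1 (Quot.out s).2.1)) 1)
      (min_le_right _ _)).toMeasure

/-- The graph determined by an edge-indicator function. -/
def graphOf {n : Fin r → ℕ} (ω : Sym2 (Vert n) → Bool) : SimpleGraph (Vert n) where
  Adj u v := u ≠ v ∧ ω s(u, v) = true
  symm := ⟨by
    intro u v h
    exact ⟨h.1.symm, by rw [Sym2.eq_swap]; exact h.2⟩⟩
  loopless := ⟨by intro u h; exact h.1 rfl⟩

/-- The number of vertices in the connected component of `v`. -/
noncomputable def compSize {n : Fin r → ℕ} (ω : Sym2 (Vert n) → Bool) (v : Vert n) : ℕ :=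
  {u | (graphOf ω).Reachable v u}.ncard

/-- The Euclidean norm on `ℝ^r`. -/
noncomputable def euclNorm (z : Fin r → ℝ) : ℝ := Real.sqrt (∑ i, z i ^ 2)

-- The linear term `a - b` is kept because it cancels when summed over two distributions.
theorem mul_log_div_le_sq_div_add_sub {a b : ℝ} (ha : 0 ≤ a) (hb : 0 < b) :
    a * Real.log (a / b) ≤ (a - b) ^ 2 / b + (a - b) := by
  have hrhs : (a - b) ^ 2 / b + (a - b) = a * (a / b - 1) := by field_simp; ring
  rw [hrhs]
  rcases ha.eq_or_lt with rfl | ha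
  · simp
  · exact mul_le_mul_of_nonneg_left (Real.log_le_sub_one_of_pos (by positivity)) ha.le

theorem bernoulli_kl_log_le_chi_squared {p q : ℝ} (hp0 : 0 ≤ p) (hp1 : p ≤ 1)
    (hq0 : 0 < q) (hq1 : q < 1) :
    p * Real.log (p / q) + (1 - p) * Real.log ((1 - p) / (1 - q)) ≤
      (p - q) ^ 2 / (q * (1 - q)) := by
  have hq1' : 0 < 1 - q := sub_pos.mpr hq1
  have h₁ := mul_log_div_le_sq_div_add_sub hp0 hq0
  have h₂ := mul_log_div_le_sq_div_add_sub (sub_nonneg.mpr hp1) hq1'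
  have hchi : (p - q) ^ 2 / q + (p - q) + ((1 - p - (1 - q)) ^ 2 / (1 - q) + (1 - p - (1 - q))) =
      (p - q) ^ 2 / (q * (1 - q)) := by
    field_simp
    ring
  linarith

/-- the Kullback–Leibler divergence (in bits) between `Bernoulli(p)` and
`Bernoulli(q)` is at most `(p - q)²/(q(1 - q)·ln 2)`.  (With Lean's conventions,
`x * logb 2 (x / y)` is automatically `0` when `x = 0`, matching the convention
`0·log₂(0/·) = 0`.) -/
theorem bernoulli_kl_le_chi_squared (p q : ℝ) (hp0 : 0 ≤ p) (hp1 : p ≤ 1)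
    (hq0 : 0 < q) (hq1 : q < 1) :
    p * Real.logb 2 (p / q) + (1 - p) * Real.logb 2 ((1 - p) / (1 - q)) ≤
      (p - q) ^ 2 / (q * (1 - q) * Real.log 2) := by
  calc p * Real.logb 2 (p / q) + (1 - p) * Real.logb 2 ((1 - p) / (1 - q))
      = (p * Real.log (p / q) + (1 - p) * Real.log ((1 - p) / (1 - q))) / Real.log 2 := by
        simp only [Real.logb]
        ring
    _ ≤ (p - q) ^ 2 / (q * (1 - q)) / Real.log 2 := by
        gcongr
        exact bernoulli_kl_log_le_chi_squared hp0 hp1 hq0 hq1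
    _ = (p - q) ^ 2 / (q * (1 - q) * Real.log 2) := div_div _ _ _

end Pandemic
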